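/- The algebra A of conjugacy classes of partial elements, together with the projections π_λ : A → A_{⪯λ}, is the inverse (projective) limit of the system of finite-dimensional algebras {A_{⪯λ}, π_{λ',λ''}} indexed by the directed poset Λ: the π_λ are compatible (π_{λ',λ''} ∘ π_{λ''} = π_{λ'}) and the induced map A → lim← A_{⪯λ} restricted appropriately realizes A as the subalgebra of compatible families with all but the 'eventually stabilized' components determined. -/

import Mathlib

/-!
By axiom 5 (`conj_cond`) the `G_λ`-classes of partial elements below `λ` embed into the
`G`-classes, so `π_λ` merely restricts coordinates to the classes that meet `Λ_{⪯λ}`.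
A product of two partial elements lying below `λ` has both factors below `λ`, hence the
structure constants of `A` at such an element only count pairs below `λ` and are those of
`A_{⪯λ}`; this makes `π_λ` multiplicative. Every class lives at the level of any of its
representatives, which gives injectivity, and a compatible family is read off at these
levels: the value does not depend on the level, because two levels lie below their wedge.
-/

open scoped Classical

/-- An admissible set of data `(Λ, G, η)` in the sense of Ivanov–Kerov /
Alekseevski–Natanzon: a poset `Λ` with least element and binary suprema, a group
`G` acting on `Λ` by order automorphisms, and a `G`-equivariant monotone family
of finite subgroups `G_λ = η λ` satisfying the admissibility axioms (in
particular axiom 5: partial elements lying below a common `λ` that are conjugate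
in `G` are conjugate in `G_λ`, and its consequence that a `G`-conjugacy class
meets each `G_λ` in at most one `G_λ`-class). -/
structure AdmissibleData (G Λ : Type*) [Group G] [PartialOrder Λ] [OrderBot Λ]
    [MulAction G Λ] where
  wedge : Λ → Λ → Λ
  isLUB_wedge : ∀ a b : Λ, IsLUB {a, b} (wedge a b)
  eta : Λ → Subgroup G
  eta_mono : Monotone eta
  eta_bot : eta ⊥ = ⊥
  smul_le_iff : ∀ (g : G) (a b : Λ), a ≤ b ↔ g • a ≤ g • b
  eta_equivariant : ∀ (g : G) (a : Λ) (x : G), x ∈ eta a ↔ g * x * g⁻¹ ∈ eta (g • a)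
  eta_stabilizes : ∀ (a : Λ) (g : G), g ∈ eta a → g • a = a
  eta_finite : ∀ a : Λ, (eta a : Set G).Finite
  pred_finite : ∀ a : Λ, {b : Λ | b ≤ a}.Finite
  conj_cond : ∀ (lam lam' lam'' : Λ) (h' h'' : G), lam' ≤ lam → lam'' ≤ lam →
    h' ∈ eta lam' → h'' ∈ eta lam'' →
    (∃ g : G, g • lam' = lam'' ∧ g * h' * g⁻¹ = h'') →
    ∃ g ∈ eta lam, g • lam' = lam'' ∧ g * h' * g⁻¹ = h''
  conj_in_sub : ∀ (a : Λ) (x y : G), x ∈ eta a → y ∈ eta a → IsConj x y →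
    ∃ g ∈ eta a, g * x * g⁻¹ = y

variable {G Λ : Type*} [Group G] [PartialOrder Λ] [OrderBot Λ] [MulAction G Λ]

/-- Partial elements: pairs `(λ, h)` with `h ∈ G_λ`. -/
abbrev PartialElt (D : AdmissibleData G Λ) : Type _ := {p : Λ × G // p.2 ∈ D.eta p.1}

/-- Conjugation of partial elements: `g • (λ, h) = (g•λ, g h g⁻¹)`; two partial
elements are equivalent iff they lie in the same `G`-orbit (conjugacy class). -/
def orbSetoid (D : AdmissibleData G Λ) : Setoid (PartialElt D) where
  r p q := ∃ g : G, g • p.val.1 = q.val.1 ∧ g * p.val.2 * g⁻¹ = q.val.2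
  iseqv := by
    constructor
    · intro p; exact ⟨1, by simp, by simp⟩
    · rintro p q ⟨g, h1, h2⟩
      exact ⟨g⁻¹, by rw [← h1, inv_smul_smul], by rw [← h2]; group⟩
    · rintro p q r ⟨g, h1, h2⟩ ⟨g', h1', h2'⟩
      exact ⟨g' * g, by rw [mul_smul, h1, h1'], by rw [← h2', ← h2]; group⟩

/-- Conjugacy classes of partial elements (the index set `Ω` of the basis of the
generalized Ivanov–Kerov algebra). -/
abbrev Orb (D : AdmissibleData G Λ) : Type _ := Quotient (orbSetoid D)

/-- Structure constant of the generalized IK-algebra: the number of pairs of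
partial elements in the classes `ω', ω''` whose product is exactly the given
partial element `(λ, h)`. -/
noncomputable def Pconst (D : AdmissibleData G Λ) (ω' ω'' : Orb D) (lam : Λ) (h : G) : ℕ :=
  Nat.card {pq : PartialElt D × PartialElt D //
    Quotient.mk (orbSetoid D) pq.1 = ω' ∧ Quotient.mk (orbSetoid D) pq.2 = ω'' ∧
    D.wedge pq.1.val.1 pq.2.val.1 = lam ∧ pq.1.val.2 * pq.2.val.2 = h}

/-- `ξ(l', c; l)` computed from representatives: the number of `μ` in the
`G`-orbit of `lam'` with `μ ⪯ lam` and `h ∈ G_μ`. -/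
noncomputable def xiConst (D : AdmissibleData G Λ) (lam' : Λ) (h : G) (lam : Λ) : ℕ :=
  Nat.card {μ : Λ // (∃ g : G, g • lam' = μ) ∧ μ ≤ lam ∧ h ∈ D.eta μ}

/-- Structure constant `S^{c(λ)}_{c'(λ), c''(λ)}` of the center `Z(k[G_λ])`: the
number of factorizations `h = a·b` inside `G_λ` with `a` conjugate (in `G`) to
`x'` and `b` conjugate to `x''`. -/
noncomputable def Sconst (D : AdmissibleData G Λ) (x' x'' : G) (lam : Λ) (h : G) : ℕ :=
  Nat.card {ab : G × G // ab.1 ∈ D.eta lam ∧ ab.2 ∈ D.eta lam ∧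
    IsConj x' ab.1 ∧ IsConj x'' ab.2 ∧ ab.1 * ab.2 = h}

/-- Partial elements of the truncated family `Λ_{⪯λ}`: pairs `(μ, h)` with
`μ ⪯ λ` and `h ∈ G_μ`. -/
abbrev PartialEltLe (D : AdmissibleData G Λ) (lam : Λ) : Type _ :=
  {p : Λ × G // p.1 ≤ lam ∧ p.2 ∈ D.eta p.1}

/-- Conjugacy of partial elements of `Λ_{⪯λ}` under the subgroup `G_λ`. -/
def orbSetoidLe (D : AdmissibleData G Λ) (lam : Λ) : Setoid (PartialEltLe D lam) where
  r p q := ∃ g ∈ D.eta lam, g • p.val.1 = q.val.1 ∧ g * p.val.2 * g⁻¹ = q.val.2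
  iseqv := by
    constructor
    · intro p; exact ⟨1, one_mem _, by simp, by simp⟩
    · rintro p q ⟨g, hg, h1, h2⟩
      exact ⟨g⁻¹, inv_mem hg, by rw [← h1, inv_smul_smul], by rw [← h2]; group⟩
    · rintro p q r ⟨g, hg, h1, h2⟩ ⟨g', hg', h1', h2'⟩
      exact ⟨g' * g, mul_mem hg' hg, by rw [mul_smul, h1, h1'],
        by rw [← h2', ← h2]; group⟩

/-- Conjugacy classes of partial elements of the truncated family: the basis
index set of the finite-dimensional algebra `A_{⪯λ}`. -/
abbrev OrbLe (D : AdmissibleData G Λ) (lam : Λ) : Type _ := Quotient (orbSetoidLe D lam)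

/-- Structure constants of the truncated algebra `A_{⪯λ}`. -/
noncomputable def PconstLe (D : AdmissibleData G Λ) (lam : Λ)
    (ω' ω'' : OrbLe D lam) (μ : Λ) (h : G) : ℕ :=
  Nat.card {pq : PartialEltLe D lam × PartialEltLe D lam //
    Quotient.mk (orbSetoidLe D lam) pq.1 = ω' ∧
    Quotient.mk (orbSetoidLe D lam) pq.2 = ω'' ∧
    D.wedge pq.1.val.1 pq.2.val.1 = μ ∧ pq.1.val.2 * pq.2.val.2 = h}

/-- The multiplication of the truncated algebra `A_{⪯λ}` on coordinates with
respect to the basis of conjugacy-class sums, given by the structure constants. -/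
noncomputable def mulLe (k : Type*) [Field k] (D : AdmissibleData G Λ) (lam : Λ)
    (a b : OrbLe D lam → k) : OrbLe D lam → k :=
  fun ω => ∑ᶠ ω' : OrbLe D lam, ∑ᶠ ω'' : OrbLe D lam,
    a ω' * b ω'' *
      (PconstLe D lam ω' ω'' (Quotient.out ω).val.1 (Quotient.out ω).val.2 : k)

/-- For `λ' ⪯ λ''`, every `G_{λ'}`-class of partial elements below `λ'` is
contained in a unique `G_{λ''}`-class of partial elements below `λ''`. -/
def restrictOrb (D : AdmissibleData G Λ) {lam' lam'' : Λ} (hle : lam' ≤ lam'') :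
    OrbLe D lam' → OrbLe D lam'' :=
  Quotient.lift
    (fun p => Quotient.mk (orbSetoidLe D lam'')
      ⟨p.val, le_trans p.prop.1 hle, p.prop.2⟩)
    (by rintro p q ⟨g, hg, h1, h2⟩
        exact Quotient.sound ⟨g, D.eta_mono hle hg, h1, h2⟩)

/-- The multiplication of the algebra `A` of conjugacy classes of partial
elements on coordinates with respect to the basis `{e_ω}`, given by the
structure constants. -/
noncomputable def mulGlob (k : Type*) [Field k] (D : AdmissibleData G Λ)
    (a b : Orb D → k) : Orb D → k :=
  fun ω => ∑ᶠ ω' : Orb D, ∑ᶠ ω'' : Orb D,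
    a ω' * b ω'' *
      (Pconst D ω' ω'' (Quotient.out ω).val.1 (Quotient.out ω).val.2 : k)

/-- Every `G_λ`-class of partial elements below `λ` is contained in a unique
`G`-class of partial elements. -/
def globOrb (D : AdmissibleData G Λ) (lam : Λ) : OrbLe D lam → Orb D :=
  Quotient.lift
    (fun p => Quotient.mk (orbSetoid D) ⟨p.val, p.prop.2⟩)
    (by rintro p q ⟨g, hg, h1, h2⟩
        exact Quotient.sound ⟨g, h1, h2⟩)

namespace AdmissibleData

variable (D : AdmissibleData G Λ)

theorem le_wedge_left (a b : Λ) : a ≤ D.wedge a b :=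
  (D.isLUB_wedge a b).1 (Set.mem_insert a _)

theorem le_wedge_right (a b : Λ) : b ≤ D.wedge a b :=
  (D.isLUB_wedge a b).1 (Set.mem_insert_of_mem a rfl)

def smulOrderIso (g : G) : Λ ≃o Λ where
  toEquiv := MulAction.toPerm g
  map_rel_iff' := (D.smul_le_iff g _ _).symm

theorem smul_wedge (g : G) (a b : Λ) : g • D.wedge a b = D.wedge (g • a) (g • b) := by
  have h := (D.smulOrderIso g).isLUB_image'.mpr (D.isLUB_wedge a b)
  rw [Set.image_pair] at h
  exact h.unique (D.isLUB_wedge (g • a) (g • b))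

end AdmissibleData

section Classes

variable (D : AdmissibleData G Λ)

def conjPartialElt (g : G) : PartialElt D ≃ PartialElt D where
  toFun p := ⟨(g • p.val.1, g * p.val.2 * g⁻¹), (D.eta_equivariant g _ _).mp p.prop⟩
  invFun p := ⟨(g⁻¹ • p.val.1, g⁻¹ * p.val.2 * g), by
    simpa using (D.eta_equivariant g⁻¹ _ _).mp p.prop⟩
  left_inv p := Subtype.ext (Prod.ext (inv_smul_smul g _) (by group))
  right_inv p := Subtype.ext (Prod.ext (smul_inv_smul g _) (by group))

theorem mk_conjPartialElt (g : G) (p : PartialElt D) :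
    Quotient.mk (orbSetoid D) (conjPartialElt D g p) = Quotient.mk (orbSetoid D) p :=
  (Quotient.sound (s := orbSetoid D) (a := p) ⟨g, rfl, rfl⟩).symm

theorem globOrb_injective (lam : Λ) : Function.Injective (globOrb D lam) := by
  rintro ⟨p⟩ ⟨q⟩ h
  obtain ⟨g, hg, h1, h2⟩ := D.conj_cond lam p.val.1 q.val.1 p.val.2 q.val.2
    p.prop.1 q.prop.1 p.prop.2 q.prop.2 (Quotient.exact h)
  exact Quotient.sound ⟨g, hg, h1, h2⟩

theorem globOrb_restrictOrb {lam' lam'' : Λ} (hle : lam' ≤ lam'') (σ : OrbLe D lam') :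
    globOrb D lam'' (restrictOrb D hle σ) = globOrb D lam' σ := by
  induction σ using Quotient.inductionOn
  rfl

theorem mk_mem_range_globOrb {lam : Λ} (p : PartialElt D) (hp : p.val.1 ≤ lam) :
    Quotient.mk (orbSetoid D) p ∈ Set.range (globOrb D lam) :=
  ⟨Quotient.mk (orbSetoidLe D lam) ⟨p.val, hp, p.prop⟩, rfl⟩

noncomputable def Orb.level (ω : Orb D) : Λ := ω.out.val.1

noncomputable def Orb.toOrbLe (ω : Orb D) : OrbLe D (Orb.level D ω) :=
  Quotient.mk (orbSetoidLe D _) ⟨ω.out.val, le_rfl, ω.out.prop⟩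

theorem globOrb_toOrbLe (ω : Orb D) : globOrb D _ (Orb.toOrbLe D ω) = ω :=
  Quotient.out_eq ω

end Classes

section StructureConstants

variable (D : AdmissibleData G Λ)

theorem Pconst_conj (ω' ω'' : Orb D) (g : G) (lam : Λ) (h : G) :
    Pconst D ω' ω'' (g • lam) (g * h * g⁻¹) = Pconst D ω' ω'' lam h := by
  refine Nat.card_congr
    (Equiv.subtypeEquiv ((conjPartialElt D g⁻¹).prodCongr (conjPartialElt D g⁻¹)) ?_)
  rintro ⟨p, q⟩
  simp only [Equiv.prodCongr_apply, Prod.map, mk_conjPartialElt]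
  refine and_congr_right fun _ => and_congr_right fun _ => and_congr ?_ ?_
  · change _ ↔ D.wedge (g⁻¹ • p.val.1) (g⁻¹ • q.val.1) = lam
    rw [← D.smul_wedge, inv_smul_eq_iff]
  · change _ ↔ MulAut.conj g⁻¹ p.val.2 * MulAut.conj g⁻¹ q.val.2 = h
    rw [← map_mul, ← MulEquiv.eq_symm_apply, MulAut.conj_symm_apply, inv_inv]

theorem Pconst_out (ω' ω'' : Orb D) (p : PartialElt D) :
    Pconst D ω' ω'' (Quotient.mk (orbSetoid D) p).out.val.1
      (Quotient.mk (orbSetoid D) p).out.val.2 = Pconst D ω' ω'' p.val.1 p.val.2 := by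
  obtain ⟨g, h1, h2⟩ := Quotient.exact (Quotient.out_eq (Quotient.mk (orbSetoid D) p))
  rw [← Pconst_conj D ω' ω'' g, h1, h2]

theorem Pconst_eq_zero_of_not_mem_range {lam μ : Λ} (hμ : μ ≤ lam) (ω' ω'' : Orb D) (h : G)
    (hω : ω' ∉ Set.range (globOrb D lam) ∨ ω'' ∉ Set.range (globOrb D lam)) :
    Pconst D ω' ω'' μ h = 0 := by
  refine Nat.card_eq_zero.mpr (Or.inl ⟨?_⟩)
  rintro ⟨⟨p, q⟩, rfl, rfl, hpq, -⟩
  refine hω.elim (· (mk_mem_range_globOrb D p ?_)) (· (mk_mem_range_globOrb D q ?_))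
  · exact ((D.le_wedge_left _ _).trans_eq hpq).trans hμ
  · exact ((D.le_wedge_right _ _).trans_eq hpq).trans hμ

theorem Pconst_globOrb {lam μ : Λ} (hμ : μ ≤ lam) (ω' ω'' : OrbLe D lam) (h : G) :
    Pconst D (globOrb D lam ω') (globOrb D lam ω'') μ h = PconstLe D lam ω' ω'' μ h := by
  refine Nat.card_congr
    { toFun := fun x => ⟨(⟨x.val.1.val, ?_, x.val.1.prop⟩, ⟨x.val.2.val, ?_, x.val.2.prop⟩),
        globOrb_injective D lam x.prop.1, globOrb_injective D lam x.prop.2.1, x.prop.2.2⟩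
      invFun := fun x => ⟨(⟨x.val.1.val, x.val.1.prop.2⟩, ⟨x.val.2.val, x.val.2.prop.2⟩),
        congrArg (globOrb D lam) x.prop.1, congrArg (globOrb D lam) x.prop.2.1, x.prop.2.2⟩
      left_inv := fun _ => rfl
      right_inv := fun _ => rfl }
  · exact ((D.le_wedge_left _ _).trans_eq x.prop.2.2.1).trans hμ
  · exact ((D.le_wedge_right _ _).trans_eq x.prop.2.2.1).trans hμ

end StructureConstants

theorem finsum_eq_finsum_globOrb {M : Type*} [AddCommMonoid M] (D : AdmissibleData G Λ)
    (lam : Λ) (F : Orb D → M) (hF : ∀ ω ∉ Set.range (globOrb D lam), F ω = 0) :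
    ∑ᶠ ω, F ω = ∑ᶠ σ : OrbLe D lam, F (globOrb D lam σ) := by
  rw [← finsum_mem_range (globOrb_injective D lam), finsum_mem_def, Set.indicator_eq_self.2]
  exact fun ω hω => not_imp_comm.mp (hF ω) hω

theorem mulGlob_comp_globOrb (k : Type*) [Field k] (D : AdmissibleData G Λ) (lam : Λ)
    (a b : Orb D → k) :
    mulGlob k D a b ∘ globOrb D lam = mulLe k D lam (a ∘ globOrb D lam) (b ∘ globOrb D lam) := by
  funext ω
  have hμ : ω.out.val.1 ≤ lam := ω.out.prop.1
  have hω : globOrb D lam ω = Quotient.mk (orbSetoid D) ⟨ω.out.val, ω.out.prop.2⟩ := by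
    conv_lhs => rw [← Quotient.out_eq ω]
    rfl
  simp only [Function.comp_apply, mulGlob, mulLe, hω, Pconst_out]
  rw [finsum_eq_finsum_globOrb D lam]
  · refine finsum_congr fun σ' => ?_
    rw [finsum_eq_finsum_globOrb D lam]
    · simp only [Pconst_globOrb D hμ]
    · intro ω'' hω''
      rw [Pconst_eq_zero_of_not_mem_range D hμ _ _ _ (Or.inr hω''), Nat.cast_zero, mul_zero]
  · intro ω' hω'
    refine finsum_eq_zero_of_forall_eq_zero fun ω'' => ?_
    rw [Pconst_eq_zero_of_not_mem_range D hμ _ _ _ (Or.inl hω'), Nat.cast_zero, mul_zero]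

theorem eq_of_globOrb_eq {k : Type*} {D : AdmissibleData G Λ} {f : (lam : Λ) → OrbLe D lam → k}
    (hf : ∀ (lam' lam'' : Λ) (hle : lam' ≤ lam''), f lam'' ∘ restrictOrb D hle = f lam')
    {lam₁ lam₂ : Λ} {σ₁ : OrbLe D lam₁} {σ₂ : OrbLe D lam₂}
    (h : globOrb D lam₁ σ₁ = globOrb D lam₂ σ₂) : f lam₁ σ₁ = f lam₂ σ₂ := by
  have h₁ := D.le_wedge_left lam₁ lam₂
  have h₂ := D.le_wedge_right lam₁ lam₂
  have hσ : restrictOrb D h₁ σ₁ = restrictOrb D h₂ σ₂ :=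
    globOrb_injective D _ (by rw [globOrb_restrictOrb, globOrb_restrictOrb, h])
  rw [← hf _ _ h₁, ← hf _ _ h₂, Function.comp_apply, Function.comp_apply, hσ]

/-- The algebra `A` of conjugacy classes of partial elements
(finitely supported coordinate vectors on `Ω`), with the projections
`π_λ : A → A_{⪯λ}`, `π_λ a = a ∘ globOrb D λ`, is the inverse limit of the
system `{A_{⪯λ}, π_{λ',λ''}}`: the projections are compatible
(`π_{λ',λ''} ∘ π_{λ''} = π_{λ'}`), each `π_λ` is an algebra homomorphism, the
induced map into the product is injective on `A`, and every compatible family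
supported on finitely many global classes comes from a unique element of `A`. -/
theorem stmt16 (k : Type*) [Field k] (D : AdmissibleData G Λ) :
    -- compatibility of the projections
    (∀ (lam' lam'' : Λ) (hle : lam' ≤ lam'') (a : Orb D → k),
      (a ∘ globOrb D lam'') ∘ restrictOrb D hle = a ∘ globOrb D lam') ∧
    -- each projection is multiplicative on A
    (∀ (lam : Λ) (a b : Orb D → k),
      (Function.support a).Finite → (Function.support b).Finite →
      mulGlob k D a b ∘ globOrb D lam =
        mulLe k D lam (a ∘ globOrb D lam) (b ∘ globOrb D lam)) ∧
    -- the induced map A → lim← A_{⪯λ} is injective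
    (∀ a b : Orb D → k,
      (Function.support a).Finite → (Function.support b).Finite →
      (∀ lam : Λ, a ∘ globOrb D lam = b ∘ globOrb D lam) → a = b) ∧
    -- every compatible family supported on finitely many classes comes from A
    (∀ f : (lam : Λ) → (OrbLe D lam → k),
      (∀ (lam' lam'' : Λ) (hle : lam' ≤ lam''),
        f lam'' ∘ restrictOrb D hle = f lam') →
      (∃ S : Set (Orb D), S.Finite ∧
        ∀ (lam : Λ) (ω : OrbLe D lam), f lam ω ≠ 0 → globOrb D lam ω ∈ S) →
      ∃ a : Orb D → k, (Function.support a).Finite ∧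
        ∀ lam : Λ, a ∘ globOrb D lam = f lam) := by
  refine ⟨fun lam' lam'' hle a => ?_, fun lam a b _ _ => mulGlob_comp_globOrb k D lam a b,
    fun a b _ _ hab => ?_, fun f hf ⟨S, hS, hfS⟩ => ?_⟩
  · funext σ
    exact congrArg a (globOrb_restrictOrb D hle σ)
  · funext ω
    simpa only [Function.comp_apply, globOrb_toOrbLe] using
      congrFun (hab (Orb.level D ω)) (Orb.toOrbLe D ω)
  · refine ⟨fun ω => f _ (Orb.toOrbLe D ω), hS.subset fun ω hω => ?_, fun lam => ?_⟩
    · simpa only [globOrb_toOrbLe] using hfS _ _ hω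
    · funext σ
      exact eq_of_globOrb_eq hf (globOrb_toOrbLe D _)
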